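/- For every integer n ≥ 2, the dimension vector (1^n, n−1; n), consisting of n entries equal to 1 together with one entry equal to n−1 in ambient dimension n, is dense. -/

import Mathlib

noncomputable section

/-- Complex `n × d` matrices of rank `d`, with the subspace topology of the
Euclidean (product) topology on matrices. -/
def FullRankMatrices (n d : ℕ) : Type :=
  {A : Matrix (Fin n) (Fin d) ℂ // A.rank = d}

instance (n d : ℕ) : TopologicalSpace (FullRankMatrices n d) :=
  instTopologicalSpaceSubtype

/-- The Grassmannian `Gr(d; n)` of `d`-dimensional linear subspaces of `ℂ^n`. -/
def Gr (d n : ℕ) : Type :=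
  {U : Submodule ℂ (Fin n → ℂ) // Module.finrank ℂ U = d}

/-- The map sending a rank-`d` matrix to its column span. -/
def colSpan (n d : ℕ) : FullRankMatrices n d → Gr d n :=
  fun A => ⟨LinearMap.range A.1.mulVecLin, A.2⟩

/-- `Gr(d; n)` carries the quotient topology induced by the column-span map. -/
instance (d n : ℕ) : TopologicalSpace (Gr d n) :=
  TopologicalSpace.coinduced (colSpan n d) inferInstance

/-- The linear automorphism of `ℂ^n` associated to an element of `GL(n, ℂ)`. -/
def glEquiv {n : ℕ} (M : GL (Fin n) ℂ) : (Fin n → ℂ) ≃ₗ[ℂ] (Fin n → ℂ) :=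
  LinearMap.GeneralLinearGroup.generalLinearEquiv ℂ (Fin n → ℂ)
    (Matrix.GeneralLinearGroup.toLin M)

/-- The action of `GL(n, ℂ)` on the Grassmannian, `M • U = M(U)`. -/
def glAction {n d : ℕ} (M : GL (Fin n) ℂ) (U : Gr d n) : Gr d n :=
  ⟨U.1.map (glEquiv M).toLinearMap, by
    rw [LinearEquiv.finrank_map_eq]; exact U.2⟩

/-- A dimension vector, recorded as the list `[d_1, …, d_k]` of subspace dimensions
together with the ambient dimension `n`, is dense if some point of
`∏ᵢ Gr(dᵢ; n)` has dense orbit under the diagonal `GL(n, ℂ)`-action. -/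
def DenseDV (d : List ℕ) (n : ℕ) : Prop :=
  ∃ x : ∀ i : Fin d.length, Gr (d.get i) n,
    Dense {y : ∀ i : Fin d.length, Gr (d.get i) n |
      ∃ M : GL (Fin n) ℂ, (fun i => glAction M (x i)) = y}

end

open Module Submodule Set Polynomial Topology

/-!
Call a tuple of lines `ℓ₀, …, ℓₘ` and a hyperplane `H` in `ℂ^(m+1)` generic when the lines span
and none of them lies in `H`. Any two generic tuples are `GL`-translates of each other: choose
`vₖ ∈ ℓₖ` and a functional `f` with kernel `H`, rescaled so that `f vₖ = 1`; the linear map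
between two such bases intertwines the two functionals, hence maps one hyperplane to the other.

Writing the subspaces as column spans of matrices, genericity is the nonvanishing of finitely many
determinants. Along any affine line in matrix space these are polynomials, nonzero at one explicit
generic tuple, so generic matrix tuples are dense; since the column-span map is continuous and
surjective, the orbit of a generic tuple is dense.
-/

section DetDense

lemma Matrix.exists_polynomial_eval_eq_det_add_smul {ι R : Type*} [Fintype ι] [DecidableEq ι]
    [CommRing R] (A B : Matrix ι ι R) : ∃ p : R[X], ∀ t, p.eval t = (A + t • B).det := by
  refine ⟨(A.map C + (X : R[X]) • B.map C).det, fun t => ?_⟩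
  rw [← coe_evalRingHom, RingHom.map_det]
  congr 1
  ext i j
  simp [mul_comm t]

variable {𝕜 E ι κ : Type*} [NontriviallyNormedField 𝕜] [AddCommGroup E] [Module 𝕜 E]
  [TopologicalSpace E] [ContinuousAdd E] [ContinuousSMul 𝕜 E] [Fintype ι] [DecidableEq ι]

lemma dense_setOf_forall_det_ne_zero [Finite κ] (A : κ → E →ₗ[𝕜] Matrix ι ι 𝕜) {b : E}
    (hb : ∀ k, (A k b).det ≠ 0) : Dense {g | ∀ k, (A k g).det ≠ 0} := by
  intro a
  set L : 𝕜 → E := fun t => a + t • (b - a)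
  have hbad : {t | ∃ k, (A k (L t)).det = 0}.Finite := by
    rw [ofPred_exists]
    refine finite_iUnion fun k => ?_
    obtain ⟨p, hp⟩ := (A k a).exists_polynomial_eval_eq_det_add_smul (A k (b - a))
    have hL : ∀ t, A k (L t) = A k a + t • A k (b - a) := fun t => by
      rw [← map_smul, ← map_add]
    have hp0 : p ≠ 0 := fun h => hb k (by simpa [h, hL] using (hp 1).symm)
    refine (finite_setOfPred_isRoot hp0).subset fun t ht => ?_
    rw [mem_ofPred_eq, IsRoot.def, hp, ← hL]
    exact ht
  have hgood : Dense {t | ∀ k, (A k (L t)).det ≠ 0} :=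
    (dense_univ.sdiff_finite hbad).mono fun t ht k hk => ht.2 ⟨k, hk⟩
  have ha : a ∈ range L := ⟨0, by simp [L]⟩
  have hL : Continuous L := by fun_prop
  exact closure_mono (image_subset_iff.mpr fun _ ht => ht)
    (hL.range_subset_closure_image_dense hgood ha)

end DetDense

section Hyperplanes

variable {K V V' ι : Type*} [Field K] [AddCommGroup V] [Module K V] [AddCommGroup V'] [Module K V']

lemma Submodule.exists_dual_ker_eq [FiniteDimensional K V] {W : Submodule K V}
    (hW : finrank K W + 1 = finrank K V) : ∃ f : Dual K V, LinearMap.ker f = W := by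
  obtain ⟨f, hf, hWf⟩ := W.exists_dual_map_eq_bot_of_lt_top
    (lt_top_of_finrank_lt_finrank (by omega)) inferInstance
  refine ⟨f, (eq_of_le_of_finrank_eq (LinearMap.le_ker_iff_map.mpr hWf) ?_).symm⟩
  have := Module.Dual.finrank_ker_add_one_of_ne_zero hf
  omega

lemma Module.Basis.exists_span_singleton_eq_and_apply_eq_one (b : Basis ι K V) {f : Dual K V}
    (hf : ∀ i, f (b i) ≠ 0) : ∃ u : Basis ι K V, (∀ i, K ∙ u i = K ∙ b i) ∧ ∀ i, f (u i) = 1 :=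
  ⟨b.unitsSMul fun i => Units.mk0 _ (inv_ne_zero (hf i)),
    fun i => by rw [unitsSMul_apply]; exact span_singleton_smul_eq (Units.isUnit _) _,
    fun i => by simp [unitsSMul_apply, hf i]⟩

lemma Module.Basis.exists_linearEquiv_map_span_singleton_and_ker (b : Basis ι K V)
    (b' : Basis ι K V') {f : Dual K V} {f' : Dual K V'} (hf : ∀ i, f (b i) ≠ 0)
    (hf' : ∀ i, f' (b' i) ≠ 0) :
    ∃ E : V ≃ₗ[K] V',
      (∀ i, (K ∙ b i).map (E : V →ₗ[K] V') = K ∙ b' i) ∧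
        (LinearMap.ker f).map (E : V →ₗ[K] V') = LinearMap.ker f' := by
  obtain ⟨u, hub, hfu⟩ := b.exists_span_singleton_eq_and_apply_eq_one hf
  obtain ⟨u', hub', hfu'⟩ := b'.exists_span_singleton_eq_and_apply_eq_one hf'
  let E := u.equiv u' (Equiv.refl ι)
  have hE : f' ∘ₗ (E : V →ₗ[K] V') = f := u.ext fun i => by simp [E, hfu, hfu']
  refine ⟨E, fun i => ?_, ?_⟩
  · rw [← hub, ← hub', map_span, image_singleton]
    simp [E]
  · rw [← hE, LinearMap.ker_comp, map_comap_eq_of_surjective E.surjective]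

end Hyperplanes

lemma glEquiv_surjective (n : ℕ) : Function.Surjective (glEquiv (n := n)) := fun E =>
  ⟨Matrix.GeneralLinearGroup.toLin.symm
    ((LinearMap.GeneralLinearGroup.generalLinearEquiv ℂ _).symm E), by simp [glEquiv]⟩

lemma colSpan_surjective (n d : ℕ) : Function.Surjective (colSpan n d) := by
  rintro ⟨U, hU⟩
  let f := U.subtype ∘ₗ ((finBasisOfFinrankEq ℂ U hU).equivFun.symm : (Fin d → ℂ) →ₗ[ℂ] U)
  have hf : LinearMap.range f = U := by
    rw [LinearMap.range_comp_of_range_eq_top _ (LinearEquiv.range _), range_subtype]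
  have hA : (LinearMap.toMatrix' f).mulVecLin = f := Matrix.toLin'_toMatrix' f
  exact ⟨⟨LinearMap.toMatrix' f, by rw [Matrix.rank, hA, hf, hU]⟩,
    Subtype.ext (by simp [colSpan, hA, hf])⟩

lemma continuous_colSpan (n d : ℕ) : Continuous (colSpan n d) := continuous_coinduced_rng

lemma exists_dense_orbit_of_dense {ι : Type*} {d : ι → ℕ} {n : ℕ}
    {G : Set (∀ i, Matrix (Fin n) (Fin (d i)) ℂ)} (hG : Dense G)
    (hrank : ∀ g ∈ G, ∀ i, (g i).rank = d i)
    (horbit : ∀ g ∈ G, ∀ g' ∈ G, ∃ M : GL (Fin n) ℂ, ∀ i,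
      (LinearMap.range (g i).mulVecLin).map (glEquiv M).toLinearMap =
        LinearMap.range (g' i).mulVecLin) :
    ∃ x : ∀ i, Gr (d i) n,
      Dense {y : ∀ i, Gr (d i) n | ∃ M : GL (Fin n) ℂ, (fun i => glAction M (x i)) = y} := by
  obtain ⟨z, hz⟩ := hG.nonempty
  refine ⟨fun i => colSpan n (d i) ⟨z i, hrank z hz i⟩, ?_⟩
  let val : (∀ i, FullRankMatrices n (d i)) → ∀ i, Matrix (Fin n) (Fin (d i)) ℂ :=
    fun A i => (A i).1
  let colSpans : (∀ i, FullRankMatrices n (d i)) → ∀ i, Gr (d i) n :=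
    fun A i => colSpan n (d i) (A i)
  have hval : IsInducing val := IsInducing.piMap fun i => IsInducing.subtypeVal
  have hG_val : Dense (val ⁻¹' G) := by
    refine hval.dense_iff.mpr fun A => ?_
    rw [image_preimage_eq_of_subset fun g hg => ⟨fun i => ⟨g i, hrank g hg i⟩, rfl⟩, hG.closure_eq]
    trivial
  have hspans : DenseRange colSpans :=
    (Function.Surjective.piMap fun i => colSpan_surjective n (d i)).denseRange
  have hspans_cont : Continuous colSpans :=
    continuous_pi fun i => (continuous_colSpan n (d i)).comp (continuous_apply i)
  refine (hspans.dense_image hspans_cont hG_val).mono ?_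
  rintro _ ⟨A, hA, rfl⟩
  obtain ⟨M, hM⟩ := horbit z hz _ hA
  exact ⟨M, funext fun i => Subtype.ext (hM i)⟩

section TupleColumns

variable {R ι : Type*} [CommSemiring R] {d : ι → ℕ} {n : ℕ}

def tupleCol (i : ι) {c : ℕ} (h : d i = c) (j : Fin c) :
    (∀ i, Matrix (Fin n) (Fin (d i)) R) →ₗ[R] (Fin n → R) where
  toFun g := (g i).col (Fin.cast h.symm j)
  map_add' _ _ := rfl
  map_smul' _ _ := rfl

lemma range_tupleCol (g : ∀ i, Matrix (Fin n) (Fin (d i)) R) (i : ι) {c : ℕ} (h : d i = c) :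
    range (fun j => tupleCol i h j g) = range (g i).col :=
  (finCongr h.symm).surjective.range_comp (g i).col

end TupleColumns

lemma Matrix.det_ne_zero_iff_linearIndependent_rows {ι K : Type*} [Fintype ι] [DecidableEq ι]
    [Field K] {A : Matrix ι ι K} : A.det ≠ 0 ↔ LinearIndependent K (fun i => A i) := by
  rw [← isUnit_iff_ne_zero, ← isUnit_iff_isUnit_det]
  exact linearIndependent_rows_iff_isUnit.symm

namespace OnesHyperplane

variable (m : ℕ)

abbrev dims : List ℕ := List.replicate (m + 1) 1 ++ [m]

abbrev Tuple : Type := ∀ i : Fin (dims m).length, Matrix (Fin (m + 1)) (Fin ((dims m).get i)) ℂ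

def line (k : Fin (m + 1)) : Fin (dims m).length := ⟨k, by simp⟩

def hyperplane : Fin (dims m).length := ⟨m + 1, by simp⟩

lemma get_line (k : Fin (m + 1)) : (dims m).get (line m k) = 1 := by
  simp [line, dims, List.getElem_append]
  omega

lemma get_hyperplane : (dims m).get (hyperplane m) = m := by
  simp [hyperplane]

lemma eq_line_or_eq_hyperplane (i : Fin (dims m).length) :
    (∃ k, i = line m k) ∨ i = hyperplane m := by
  have hi : (i : ℕ) ≤ m + 1 := by simpa using i.2
  rcases hi.lt_or_eq with hi | hi
  · exact .inl ⟨⟨i, hi⟩, rfl⟩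
  · exact .inr (Fin.ext hi)

variable {m}

def lineVec (k : Fin (m + 1)) : Tuple m →ₗ[ℂ] (Fin (m + 1) → ℂ) :=
  tupleCol (line m k) (get_line m k) 0

def hyperplaneVec (j : Fin m) : Tuple m →ₗ[ℂ] (Fin (m + 1) → ℂ) :=
  tupleCol (hyperplane m) (get_hyperplane m) j

def IsGeneric (g : Tuple m) : Prop :=
  LinearIndependent ℂ (fun k => lineVec k g) ∧ LinearIndependent ℂ (fun j => hyperplaneVec j g) ∧
    ∀ k, lineVec k g ∉ span ℂ (range fun j => hyperplaneVec j g)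

def rowsMatrix : Option (Fin (m + 1)) → Tuple m →ₗ[ℂ] Matrix (Fin (m + 1)) (Fin (m + 1)) ℂ
  | none => LinearMap.pi lineVec
  | some k => LinearMap.pi (Fin.snoc hyperplaneVec (lineVec k))

lemma isGeneric_iff_forall_det_ne_zero {g : Tuple m} :
    IsGeneric g ↔ ∀ k, (rowsMatrix k g).det ≠ 0 := by
  have hrows (k : Fin (m + 1)) : (fun c => rowsMatrix (some k) g c) =
      Fin.snoc (fun j => hyperplaneVec j g) (lineVec k g) := by
    ext c : 1
    change Fin.snoc (α := fun _ => Tuple m →ₗ[ℂ] (Fin (m + 1) → ℂ))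
      hyperplaneVec (lineVec k) c g = _
    refine Fin.lastCases ?_ (fun j => ?_) c <;> simp
  simp only [Option.forall, Matrix.det_ne_zero_iff_linearIndependent_rows, hrows,
    linearIndependent_finSnoc, forall_and, forall_const]
  rfl

lemma range_mulVecLin_line (g : Tuple m) (k : Fin (m + 1)) :
    LinearMap.range (g (line m k)).mulVecLin = ℂ ∙ lineVec k g := by
  rw [Matrix.range_mulVecLin, ← range_tupleCol g _ (get_line m k), range_unique]
  rfl

lemma range_mulVecLin_hyperplane (g : Tuple m) :
    LinearMap.range (g (hyperplane m)).mulVecLin = span ℂ (range fun j => hyperplaneVec j g) := by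
  rw [Matrix.range_mulVecLin, ← range_tupleCol g _ (get_hyperplane m)]
  rfl

lemma IsGeneric.rank_eq {g : Tuple m} (hg : IsGeneric g) (i : Fin (dims m).length) :
    (g i).rank = (dims m).get i := by
  rcases eq_line_or_eq_hyperplane m i with ⟨k, rfl⟩ | rfl
  · rw [Matrix.rank, range_mulVecLin_line, finrank_span_singleton (hg.1.ne_zero k), get_line]
  · rw [Matrix.rank, range_mulVecLin_hyperplane, finrank_span_eq_card hg.2.1, get_hyperplane,
      Fintype.card_fin]

lemma IsGeneric.exists_dual {g : Tuple m} (hg : IsGeneric g) :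
    ∃ f : Dual ℂ (Fin (m + 1) → ℂ),
      LinearMap.ker f = span ℂ (range fun j => hyperplaneVec j g) ∧ ∀ k, f (lineVec k g) ≠ 0 := by
  obtain ⟨f, hf⟩ := Submodule.exists_dual_ker_eq (W := span ℂ (range fun j => hyperplaneVec j g))
    (by rw [finrank_span_eq_card hg.2.1]; simp)
  exact ⟨f, hf, fun k hk => hg.2.2 k (hf ▸ hk)⟩

lemma IsGeneric.exists_glEquiv {g g' : Tuple m} (hg : IsGeneric g) (hg' : IsGeneric g') :
    ∃ M : GL (Fin (m + 1)) ℂ, ∀ i, (LinearMap.range (g i).mulVecLin).map (glEquiv M).toLinearMap =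
      LinearMap.range (g' i).mulVecLin := by
  obtain ⟨f, hfker, hf⟩ := hg.exists_dual
  obtain ⟨f', hfker', hf'⟩ := hg'.exists_dual
  let b := basisOfLinearIndependentOfCardEqFinrank hg.1 (by simp)
  let b' := basisOfLinearIndependentOfCardEqFinrank hg'.1 (by simp)
  obtain ⟨E, hElines, hEker⟩ := b.exists_linearEquiv_map_span_singleton_and_ker b' (f := f)
    (f' := f') (by simpa [b] using hf) (by simpa [b'] using hf')
  obtain ⟨M, rfl⟩ := glEquiv_surjective _ E
  refine ⟨M, fun i => ?_⟩
  rcases eq_line_or_eq_hyperplane m i with ⟨k, rfl⟩ | rfl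
  · rw [range_mulVecLin_line, range_mulVecLin_line]
    simpa [b, b'] using hElines k
  · rw [range_mulVecLin_hyperplane, range_mulVecLin_hyperplane, ← hfker, ← hfker', hEker]

def standardTuple : Tuple m := fun i => Matrix.of fun r c =>
  if (i : ℕ) ≤ m then (if (r : ℕ) = i then 1 else 0)
  else (if (r : ℕ) = c then 1 else 0) - (if (r : ℕ) = m then 1 else 0)

lemma lineVec_standardTuple (k : Fin (m + 1)) : lineVec k standardTuple = Pi.single k 1 := by
  ext r
  simp [lineVec, tupleCol, standardTuple, line, Pi.single_apply, Fin.ext_iff, Fin.is_le]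

lemma hyperplaneVec_standardTuple (j : Fin m) :
    hyperplaneVec j standardTuple = Pi.single j.castSucc 1 - Pi.single (Fin.last m) 1 := by
  ext r
  simp [hyperplaneVec, tupleCol, standardTuple, hyperplane, Pi.single_apply, Fin.ext_iff]
  rfl

lemma isGeneric_standardTuple : IsGeneric (standardTuple (m := m)) := by
  simp only [IsGeneric, lineVec_standardTuple, hyperplaneVec_standardTuple]
  refine ⟨Pi.linearIndependent_single_one _ ℂ, ?_, fun k hk => ?_⟩
  · refine LinearIndependent.of_comp (LinearMap.funLeft ℂ ℂ Fin.castSucc) ?_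
    convert Pi.linearIndependent_single_one (Fin m) ℂ with j
    ext i
    simp [LinearMap.funLeft, Pi.single_apply, (Fin.castSucc_lt_last i).ne]
  · let σ : Dual ℂ (Fin (m + 1) → ℂ) := ∑ i, LinearMap.proj i
    have hσ : span ℂ (range fun j : Fin m => Pi.single j.castSucc 1 - Pi.single (Fin.last m) 1) ≤
        LinearMap.ker σ := by
      rw [span_le]
      rintro _ ⟨j, rfl⟩
      simp [σ]
    simpa [σ] using hσ hk

lemma dense_setOf_isGeneric : Dense {g : Tuple m | IsGeneric g} := by
  simp only [isGeneric_iff_forall_det_ne_zero]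
  exact dense_setOf_forall_det_ne_zero rowsMatrix
    (isGeneric_iff_forall_det_ne_zero.mp isGeneric_standardTuple)

end OnesHyperplane

/-- the dimension vector `(1^n, n-1; n)` is dense for `n ≥ 2`. -/
theorem dense_ones_hyperplane (n : ℕ) (hn : 2 ≤ n) :
    DenseDV (List.replicate n 1 ++ [n - 1]) n := by
  obtain ⟨m, rfl⟩ : ∃ m, n = m + 1 := ⟨n - 1, by omega⟩
  exact exists_dense_orbit_of_dense OnesHyperplane.dense_setOf_isGeneric
    (fun _ hg => hg.rank_eq) (fun _ hg _ hg' => hg.exists_glEquiv hg')
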